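/- The simplicial product update agrees with the Kripke product update: for a simplicial model M and a simplicial action model 𝒜, the Kripke models F(M[𝒜]) and F(M)[F(𝒜)] are isomorphic; symmetrically, for a local proper Kripke model M and action model 𝒜, G(M[𝒜]) and G(M)[G(𝒜)] are isomorphic simplicial models. -/

import Mathlib

/-! ### Chromatic simplicial complexes and Kripke frames -/

/-- A chromatic simplicial complex over the set of agents `A`, on the vertex type `V`. -/
structure CSC (A V : Type) where
  simplexes : Set (Set V)
  nonempty_mem : ∀ X ∈ simplexes, X.Nonempty
  finite_mem : ∀ X ∈ simplexes, X.Finite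
  down_closed : ∀ X ∈ simplexes, ∀ Y : Set V, Y ⊆ X → Y.Nonempty → Y ∈ simplexes
  color : V → A
  chromatic : ∀ X ∈ simplexes, Set.InjOn color X

namespace CSC

variable {A V W : Type}

/-- A vertex of the complex. -/
def IsVertex (C : CSC A V) (v : V) : Prop := {v} ∈ C.simplexes

/-- A facet: a maximal simplex. -/
def IsFacet (C : CSC A V) (X : Set V) : Prop :=
  X ∈ C.simplexes ∧ ∀ Y ∈ C.simplexes, X ⊆ Y → X = Y

/-- A pure chromatic simplicial complex of dimension `n`: all facets have `n+1` vertices. -/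
def Pure (C : CSC A V) (n : ℕ) : Prop :=
  ∀ X, C.IsFacet X → X.ncard = n + 1

/-- A chromatic simplicial map: sends simplexes to simplexes and preserves colors. -/
def IsChromMap (C : CSC A V) (D : CSC A W) (f : V → W) : Prop :=
  (∀ X ∈ C.simplexes, f '' X ∈ D.simplexes) ∧
  (∀ v, C.IsVertex v → D.color (f v) = C.color v)

/-- The type of facets of a complex. -/
def Facets (C : CSC A V) : Type := {X : Set V // C.IsFacet X}

/-- The vertices of a complex, as a type. -/
abbrev Vertices (C : CSC A V) : Type := {v : V // C.IsVertex v}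

end CSC

/-- A Kripke frame over the set of agents `A` with states `S`:
a family of equivalence (indistinguishability) relations indexed by agents. -/
structure KFrame (A S : Type) where
  rel : A → S → S → Prop
  isEquiv : ∀ a, Equivalence (rel a)

namespace KFrame

/-- A Kripke frame is proper if any two distinct states are distinguished by some agent. -/
def Proper {A S : Type} (M : KFrame A S) : Prop := ∀ s t : S, (∀ a, M.rel a s t) → s = t

/-- A morphism of Kripke frames. -/
def IsMorphism {A S T : Type} (M : KFrame A S) (N : KFrame A T) (f : S → T) : Prop :=
  ∀ a u v, M.rel a u v → N.rel a (f u) (f v)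

end KFrame


lemma CSC.isVertex_of_mem {A V : Type} (C : CSC A V) {X : Set V} {v : V}
    (hX : X ∈ C.simplexes) (hv : v ∈ X) : C.IsVertex v :=
  C.down_closed X hX {v} (by simpa using hv) ⟨v, rfl⟩

/-! ### Basic facts about pure chromatic complexes over `n+1` agents -/

namespace CSC

variable {n : ℕ} {V : Type}

lemma ncard_le_of_mem (C : CSC (Fin (n+1)) V) {X : Set V} (hX : X ∈ C.simplexes) :
    X.ncard ≤ n + 1 := by
  have h1 : (C.color '' X).ncard = X.ncard := Set.ncard_image_of_injOn (C.chromatic X hX)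
  calc X.ncard = (C.color '' X).ncard := h1.symm
    _ ≤ (Set.univ : Set (Fin (n+1))).ncard :=
        Set.ncard_le_ncard (Set.subset_univ _) Set.finite_univ
    _ = n + 1 := by rw [Set.ncard_univ]; simp

/-- Every simplex of a chromatic complex over `n+1` agents is contained in a facet. -/
lemma exists_facet_above (C : CSC (Fin (n+1)) V) :
    ∀ (k : ℕ) (X : Set V), X ∈ C.simplexes → n + 1 ≤ X.ncard + k →
      ∃ Y, C.IsFacet Y ∧ X ⊆ Y := by
  intro k
  induction k with
  | zero =>
    intro X hX hle
    refine ⟨X, ⟨hX, ?_⟩, subset_rfl⟩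
    intro Y hY hXY
    exact (Set.eq_of_subset_of_ncard_le hXY
      (le_trans (C.ncard_le_of_mem hY) (by omega)) (C.finite_mem Y hY))
  | succ k ih =>
    intro X hX hle
    by_cases hf : C.IsFacet X
    · exact ⟨X, hf, subset_rfl⟩
    · simp only [IsFacet, hX, true_and] at hf
      push_neg at hf
      obtain ⟨Y, hY, hXY, hne⟩ := hf
      have hlt : X.ncard < Y.ncard :=
        Set.ncard_lt_ncard (ssubset_of_subset_of_ne hXY hne) (C.finite_mem Y hY)
      obtain ⟨Z, hZ, hYZ⟩ := ih Y hY (by omega)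
      exact ⟨Z, hZ, hXY.trans hYZ⟩

lemma mem_facet (C : CSC (Fin (n+1)) V) {X : Set V} (hX : X ∈ C.simplexes) :
    ∃ Y, C.IsFacet Y ∧ X ⊆ Y :=
  C.exists_facet_above (n+1) X hX (by omega)

/-- In a pure complex of dimension `n` over `n+1` agents, every facet contains a vertex
of each color. -/
lemma facet_exists_color (C : CSC (Fin (n+1)) V) (hp : C.Pure n)
    {X : Set V} (hX : C.IsFacet X) (a : Fin (n+1)) : ∃ v ∈ X, C.color v = a := by
  have himg : (C.color '' X).ncard = n + 1 := by
    rw [Set.ncard_image_of_injOn (C.chromatic X hX.1)]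
    exact hp X hX
  have huniv : C.color '' X = Set.univ := by
    apply Set.eq_of_subset_of_ncard_le (Set.subset_univ _) ?_ Set.finite_univ
    rw [himg, Set.ncard_univ]; simp
  have ha : a ∈ C.color '' X := by rw [huniv]; trivial
  obtain ⟨v, hv, hc⟩ := ha
  exact ⟨v, hv, hc⟩

end CSC

/-! ### The functor F : from pure chromatic simplicial complexes to Kripke frames. -/

/-- The Kripke frame associated with a pure chromatic simplicial complex: states are the
facets, and two facets are indistinguishable by agent `a` iff they share an `a`-colored
vertex. -/
def kframeOf {n : ℕ} {V : Type} (C : CSC (Fin (n+1)) V) (hp : C.Pure n) :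
    KFrame (Fin (n+1)) C.Facets where
  rel a X Y := ∃ v, v ∈ X.1 ∩ Y.1 ∧ C.color v = a
  isEquiv a := by
    constructor
    · intro X
      obtain ⟨v, hv, hc⟩ := C.facet_exists_color hp X.2 a
      exact ⟨v, ⟨hv, hv⟩, hc⟩
    · rintro X Y ⟨v, ⟨h1, h2⟩, hc⟩
      exact ⟨v, ⟨h2, h1⟩, hc⟩
    · rintro X Y Z ⟨v, ⟨hvX, hvY⟩, hcv⟩ ⟨w, ⟨hwY, hwZ⟩, hcw⟩
      have hvw : v = w := C.chromatic Y.1 Y.2.1 hvY hwY (by rw [hcv, hcw])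
      exact ⟨v, ⟨hvX, by rw [hvw]; exact hwZ⟩, hcv⟩

lemma kframeOf_proper {n : ℕ} {V : Type} (C : CSC (Fin (n+1)) V) (hp : C.Pure n) :
    (kframeOf C hp).Proper := by
  have key : ∀ Z W : C.Facets, (∀ a, ∃ v, v ∈ Z.1 ∩ W.1 ∧ C.color v = a) → W.1 ⊆ Z.1 := by
    intro Z W hzw w hw
    obtain ⟨v, ⟨hvZ, hvW⟩, hcv⟩ := hzw (C.color w)
    have : v = w := C.chromatic W.1 W.2.1 hvW hw hcv
    exact this ▸ hvZ
  intro X Y h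
  apply Subtype.ext
  apply Set.Subset.antisymm
  · apply key Y X
    intro a
    obtain ⟨v, hv, hc⟩ := h a
    exact ⟨v, ⟨hv.2, hv.1⟩, hc⟩
  · exact key X Y h

/-! ### The functor G : from Kripke frames to pure chromatic simplicial complexes. -/

/-- The identification of formal vertices `(s, i)`: `(s,i) ≈ (t,j)` iff `i = j` and
`s ∼_{a_i} t`. -/
def gSetoid {n : ℕ} {S : Type} (M : KFrame (Fin (n+1)) S) : Setoid (S × Fin (n+1)) where
  r p q := p.2 = q.2 ∧ M.rel p.2 p.1 q.1
  iseqv := by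
    constructor
    · exact fun p => ⟨rfl, (M.isEquiv p.2).refl p.1⟩
    · rintro ⟨s, i⟩ ⟨t, j⟩ ⟨h1, h2⟩
      dsimp at h1 h2 ⊢
      subst h1
      exact ⟨rfl, (M.isEquiv i).symm h2⟩
    · rintro ⟨s, i⟩ ⟨t, j⟩ ⟨u, k⟩ ⟨h1, h2⟩ ⟨h3, h4⟩
      dsimp at h1 h2 h3 h4 ⊢
      subst h1; subst h3
      exact ⟨rfl, (M.isEquiv i).trans h2 h4⟩

/-- The vertices of the simplicial complex associated with a Kripke frame:
equivalence classes of formal vertices. -/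
def GVert {n : ℕ} {S : Type} (M : KFrame (Fin (n+1)) S) : Type :=
  Quotient (gSetoid M)

/-- The `n`-simplex glued in for the state `s`. -/
def gFacet {n : ℕ} {S : Type} (M : KFrame (Fin (n+1)) S) (s : S) : Set (GVert M) :=
  Set.range fun i => Quotient.mk (gSetoid M) (s, i)

/-- The chromatic simplicial complex associated with a Kripke frame. -/
def cscOf {n : ℕ} {S : Type} (M : KFrame (Fin (n+1)) S) : CSC (Fin (n+1)) (GVert M) where
  simplexes := {X | X.Nonempty ∧ ∃ s, X ⊆ gFacet M s}
  nonempty_mem _ hX := hX.1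
  finite_mem X hX := by
    obtain ⟨-, s, hs⟩ := hX
    exact (Set.finite_range _).subset hs
  down_closed X hX Y hYX hY := by
    obtain ⟨-, s, hs⟩ := hX
    exact ⟨hY, s, hYX.trans hs⟩
  color := Quotient.lift Prod.snd fun _ _ h => h.1
  chromatic := by
    rintro X ⟨-, s, hs⟩ u hu v hv hcol
    obtain ⟨i, hi⟩ := hs hu
    obtain ⟨j, hj⟩ := hs hv
    rw [← hi, ← hj] at hcol ⊢
    have : i = j := hcol
    rw [this]

lemma gFacet_mem_simplexes {n : ℕ} {S : Type} (M : KFrame (Fin (n+1)) S) (s : S) :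
    gFacet M s ∈ (cscOf M).simplexes :=
  ⟨⟨Quotient.mk (gSetoid M) (s, 0), ⟨0, rfl⟩⟩, s, subset_rfl⟩

lemma gFacet_subset_iff {n : ℕ} {S : Type} (M : KFrame (Fin (n+1)) S) {s t : S} :
    gFacet M s ⊆ gFacet M t ↔ ∀ i, M.rel i s t := by
  constructor
  · intro h i
    obtain ⟨j, hj⟩ := h ⟨i, rfl⟩
    have := Quotient.exact hj
    obtain ⟨h1, h2⟩ := this
    dsimp at h1 h2
    rw [← h1]
    exact (M.isEquiv j).symm h2
  · rintro h v ⟨i, rfl⟩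
    exact ⟨i, Quotient.sound ⟨rfl, (M.isEquiv i).symm (h i)⟩⟩

lemma gFacet_isFacet {n : ℕ} {S : Type} (M : KFrame (Fin (n+1)) S) (s : S) :
    (cscOf M).IsFacet (gFacet M s) := by
  refine ⟨gFacet_mem_simplexes M s, ?_⟩
  rintro Y ⟨-, t, ht⟩ hsub
  have h1 : gFacet M s ⊆ gFacet M t := hsub.trans ht
  have h2 : gFacet M t ⊆ gFacet M s :=
    (gFacet_subset_iff M).2 fun i => (M.isEquiv i).symm ((gFacet_subset_iff M).1 h1 i)
  exact Set.Subset.antisymm hsub (ht.trans h2)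

lemma isFacet_cscOf_iff {n : ℕ} {S : Type} (M : KFrame (Fin (n+1)) S) (X : Set (GVert M)) :
    (cscOf M).IsFacet X ↔ ∃ s, X = gFacet M s := by
  constructor
  · rintro ⟨⟨hne, s, hs⟩, hmax⟩
    exact ⟨s, hmax _ (gFacet_mem_simplexes M s) hs⟩
  · rintro ⟨s, rfl⟩
    exact gFacet_isFacet M s

lemma ncard_gFacet {n : ℕ} {S : Type} (M : KFrame (Fin (n+1)) S) (s : S) :
    (gFacet M s).ncard = n + 1 := by
  have hinj : Function.Injective fun i : Fin (n+1) => Quotient.mk (gSetoid M) (s, i) := by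
    intro i j hij
    exact (Quotient.exact hij).1
  show (Set.range (fun i : Fin (n+1) => Quotient.mk (gSetoid M) (s, i))).ncard = n + 1
  rw [← Set.image_univ, Set.ncard_image_of_injective _ hinj, Set.ncard_univ]
  simp

/-- The complex associated with a Kripke frame over `n+1` agents is pure of dimension `n`. -/
lemma cscOf_pure {n : ℕ} {S : Type} (M : KFrame (Fin (n+1)) S) : (cscOf M).Pure n := by
  intro X hX
  obtain ⟨s, rfl⟩ := (isFacet_cscOf_iff M X).1 hX
  exact ncard_gFacet M s

/-! ### Isomorphisms of chromatic simplicial complexes -/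

/-- Image of a set of vertices under a map defined on vertices. -/
def vimage {V W : Type} {P : V → Prop} {Q : W → Prop}
    (f : Subtype P → Subtype Q) (X : Set V) : Set W :=
  {w | ∃ v : Subtype P, v.1 ∈ X ∧ (f v).1 = w}

/-- Isomorphism of chromatic simplicial complexes: a color-preserving bijection between
the vertices which is a simplicial map in both directions. -/
def CSC.Iso {A V W : Type} (C : CSC A V) (D : CSC A W) : Prop :=
  ∃ e : C.Vertices ≃ D.Vertices,
    (∀ X ∈ C.simplexes, vimage (⇑e) X ∈ D.simplexes) ∧
    (∀ Y ∈ D.simplexes, vimage (⇑e.symm) Y ∈ C.simplexes) ∧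
    (∀ v : C.Vertices, D.color (e v).1 = C.color v.1)

/-! ### The epistemic language `𝓛_K` -/

/-- Epistemic formulas over agents `A` and atomic propositions `AP`:
`φ ::= p | ¬φ | (φ ∧ φ) | K_a φ`. -/
inductive Form (A AP : Type) : Type
  | atom : AP → Form A AP
  | neg : Form A AP → Form A AP
  | and : Form A AP → Form A AP → Form A AP
  | K : A → Form A AP → Form A AP

namespace Form

variable {A AP : Type}

/-- Implication, as a derived connective. -/
def imp (φ ψ : Form A AP) : Form A AP := .neg (.and φ (.neg ψ))

/-- Disjunction, as a derived connective. -/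
def or (φ ψ : Form A AP) : Form A AP := .neg (.and (.neg φ) (.neg ψ))

/-- A false formula. -/
def falsum [Inhabited AP] : Form A AP := .and (.atom default) (.neg (.atom default))

/-- A true formula. -/
def verum [Inhabited AP] : Form A AP := .neg falsum

end Form

/-- Finite disjunctions. -/
def bigOr {A AP : Type} [Inhabited AP] (l : List (Form A AP)) : Form A AP :=
  l.foldr Form.or Form.falsum

/-- Finite conjunctions. -/
def bigAnd {A AP : Type} [Inhabited AP] (l : List (Form A AP)) : Form A AP :=
  l.foldr Form.and Form.verum

/-! ### Simplicial models and their semantics.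
Atomic propositions are pairs `(a, x)`: "agent `a` holds the value `x`". -/

/-- A simplicial model: a chromatic simplicial complex together with a labeling of each
vertex by a set of atomic propositions concerning the agent coloring that vertex. -/
structure SModel (A V Val : Type) extends CSC A V where
  label : V → Set (A × Val)
  label_local : ∀ v, toCSC.IsVertex v → ∀ p ∈ label v, p.1 = color v

namespace SModel

variable {A V W Val : Type}

/-- Satisfaction of a formula at a facet of a simplicial model. -/
def sat (M : SModel A V Val) : Set V → Form A (A × Val) → Prop
  | X, .atom p => ∃ v ∈ X, p ∈ M.label v
  | X, .neg φ => ¬ M.sat X φ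
  | X, .and φ ψ => M.sat X φ ∧ M.sat X ψ
  | X, .K a φ => ∀ Y, M.toCSC.IsFacet Y → (∃ v, v ∈ X ∩ Y ∧ M.color v = a) → M.sat Y φ

/-- A morphism of simplicial models: a chromatic simplicial map preserving the labeling. -/
def IsMorphism (M : SModel A V Val) (N : SModel A W Val) (f : V → W) : Prop :=
  M.toCSC.IsChromMap N.toCSC f ∧ ∀ v, M.toCSC.IsVertex v → N.label (f v) = M.label v

end SModel

/-! ### Kripke models and their semantics -/

/-- A Kripke model: a Kripke frame with a valuation. -/
structure KModel (A S AP : Type) extends KFrame A S where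
  val : S → Set AP

namespace KModel

variable {A S T AP Val : Type}

/-- Standard Kripke semantics. -/
def sat (M : KModel A S AP) : S → Form A AP → Prop
  | s, .atom p => p ∈ M.val s
  | s, .neg φ => ¬ M.sat s φ
  | s, .and φ ψ => M.sat s φ ∧ M.sat s ψ
  | s, .K a φ => ∀ t, M.rel a s t → M.sat t φ

/-- A proper Kripke model. -/
def Proper (M : KModel A S AP) : Prop := M.toKFrame.Proper

/-- A local Kripke model: an agent always knows its own values. -/
def Local (M : KModel A S (A × Val)) : Prop :=
  ∀ (a : A) (s t : S), M.rel a s t →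
    {p ∈ M.val s | p.1 = a} = {p ∈ M.val t | p.1 = a}

end KModel

/-- The functor `F` on models: the Kripke model associated with a simplicial model, with
states the facets, labeled by the union of the labels of the vertices. -/
def kmodelOf {n : ℕ} {V Val : Type} (M : SModel (Fin (n+1)) V Val)
    (hp : M.toCSC.Pure n) : KModel (Fin (n+1)) M.toCSC.Facets (Fin (n+1) × Val) where
  toKFrame := kframeOf M.toCSC hp
  val X := ⋃ v ∈ X.1, M.label v


/-- The functor `G` on models: the simplicial model associated with a local Kripke model,
where the vertex `⟦(s,i)⟧` is labeled by `L(s) ∩ AP_{a_i}`. -/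
def smodelOf {n : ℕ} {S Val : Type} (M : KModel (Fin (n+1)) S (Fin (n+1) × Val))
    (hloc : M.Local) : SModel (Fin (n+1)) (GVert M.toKFrame) Val where
  toCSC := cscOf M.toKFrame
  label := Quotient.lift (fun p : S × Fin (n+1) => {q ∈ M.val p.1 | q.1 = p.2})
    (by
      rintro ⟨s, i⟩ ⟨t, j⟩ ⟨h1, h2⟩
      dsimp at h1 h2 ⊢
      subst h1
      exact hloc i s t h2)
  label_local := by
    intro v
    induction v using Quotient.ind with
    | _ p => exact fun _ q hq => hq.2

/-! ### Kripke action models and the product update -/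

/-- An action model: a Kripke frame of action points with a precondition formula for each
action point. -/
structure KActModel (A T Val : Type) extends KFrame A T where
  pre : T → Form A (A × Val)

/-- An action model is proper if its underlying frame is. -/
def KActModel.Proper {A T Val : Type} (Act : KActModel A T Val) : Prop :=
  Act.toKFrame.Proper

/-- The product update of a Kripke model with an action model: states are the pairs
`(s,t)` such that `pre(t)` holds at `s`, relations are componentwise, and the valuation
is inherited from the first component. -/
def KModel.update {A S T Val : Type} (M : KModel A S (A × Val)) (Act : KActModel A T Val) :
    KModel A {p : S × T // M.sat p.1 (Act.pre p.2)} (A × Val) where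
  rel a u v := M.rel a u.1.1 v.1.1 ∧ Act.rel a u.1.2 v.1.2
  isEquiv a := by
    constructor
    · exact fun u => ⟨(M.isEquiv a).refl _, (Act.isEquiv a).refl _⟩
    · exact fun h => ⟨(M.isEquiv a).symm h.1, (Act.isEquiv a).symm h.2⟩
    · exact fun h h' => ⟨(M.isEquiv a).trans h.1 h'.1, (Act.isEquiv a).trans h.2 h'.2⟩
  val u := M.val u.1.1

/-! ### Chromatic products -/

/-- The chromatic product of a set of vertices of `V` and a set of vertices of `W`:
pairs of vertices with matching colors. -/
def chromPair {A V W : Type} (cV : V → A) (cW : W → A) (X : Set V) (Y : Set W) :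
    Set (V × W) :=
  {p | p.1 ∈ X ∧ p.2 ∈ Y ∧ cV p.1 = cW p.2}

/-- The chromatic product of two facets of pure complexes over `n+1` agents has `n+1`
elements. -/
lemma CSC.ncard_chromPair {n : ℕ} {V W : Type} (C : CSC (Fin (n+1)) V)
    (D : CSC (Fin (n+1)) W) (hpC : C.Pure n) (hpD : D.Pure n)
    {X : Set V} {Y : Set W} (hX : C.IsFacet X) (hY : D.IsFacet Y) :
    (chromPair C.color D.color X Y).ncard = n + 1 := by
  have hinj : Set.InjOn Prod.fst (chromPair C.color D.color X Y) := by
    rintro p ⟨hp1, hp2, hpc⟩ q ⟨hq1, hq2, hqc⟩ h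
    have h2 : p.2 = q.2 := D.chromatic Y hY.1 hp2 hq2 (by rw [← hpc, ← hqc, h])
    exact Prod.ext h h2
  have himg : Prod.fst '' chromPair C.color D.color X Y = X := by
    apply Set.Subset.antisymm
    · rintro u ⟨p, hp, rfl⟩
      exact hp.1
    · intro u hu
      obtain ⟨w, hw, hcw⟩ := D.facet_exists_color hpD hY (C.color u)
      exact ⟨(u, w), ⟨hu, hw, hcw.symm⟩, rfl⟩
  rw [← Set.ncard_image_of_injOn hinj, himg]
  exact hpC X hX

lemma CSC.chromPair_nonempty {n : ℕ} {V W : Type} (C : CSC (Fin (n+1)) V)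
    (D : CSC (Fin (n+1)) W) (hpD : D.Pure n)
    {X : Set V} {Y : Set W} (hX : C.IsFacet X) (hY : D.IsFacet Y) :
    (chromPair C.color D.color X Y).Nonempty := by
  obtain ⟨u, hu⟩ := C.nonempty_mem X hX.1
  obtain ⟨w, hw, hcw⟩ := D.facet_exists_color hpD hY (C.color u)
  exact ⟨(u, w), hu, hw, hcw.symm⟩

/-! ### Simplicial action models and the simplicial product update -/

/-- A simplicial action model: a chromatic simplicial complex of actions together with a
precondition formula for each facet. -/
structure SActModel (A W Val : Type) extends CSC A W where
  pre : Set W → Form A (A × Val)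

/-- The product update of a simplicial model `M` with a simplicial action model `Act`:
the subcomplex of the chromatic cartesian product induced by the products `X × Y` of a
facet `X` of `M` and a facet (action) `Y` of `Act` such that `pre(Y)` holds at `X`.
Labels are inherited from the first component. -/
def SModel.update {A V W Val : Type} (M : SModel A V Val) (Act : SActModel A W Val) :
    SModel A (V × W) Val where
  simplexes := {Z | Z.Nonempty ∧ ∃ X Y, M.toCSC.IsFacet X ∧ Act.toCSC.IsFacet Y ∧
    M.sat X (Act.pre Y) ∧ Z ⊆ chromPair M.color Act.color X Y}
  nonempty_mem _ h := h.1
  finite_mem Z h := by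
    obtain ⟨-, X, Y, hX, hY, -, hsub⟩ := h
    exact (((M.toCSC.finite_mem X hX.1).prod (Act.toCSC.finite_mem Y hY.1)).subset
      (fun p hp => Set.mk_mem_prod hp.1 hp.2.1)).subset hsub
  down_closed Z hZ Y' hsub hne := by
    obtain ⟨-, X, Y, hX, hY, hpre, hZsub⟩ := hZ
    exact ⟨hne, X, Y, hX, hY, hpre, hsub.trans hZsub⟩
  color p := M.color p.1
  chromatic := by
    rintro Z ⟨-, X, Y, hX, hY, -, hsub⟩ p hp q hq hc
    obtain ⟨hp1, hp2, hpc⟩ := hsub hp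
    obtain ⟨hq1, hq2, hqc⟩ := hsub hq
    have h1 : p.1 = q.1 := M.toCSC.chromatic X hX.1 hp1 hq1 hc
    have h2 : p.2 = q.2 := Act.toCSC.chromatic Y hY.1 hp2 hq2 (by rw [← hpc, ← hqc, h1])
    exact Prod.ext h1 h2
  label p := M.label p.1
  label_local := by
    rintro ⟨u, w⟩ hv p hp
    obtain ⟨-, X, Y, hX, hY, -, hsub⟩ := hv
    have hu : u ∈ X := (hsub (Set.mem_singleton _)).1
    exact M.label_local u (M.toCSC.isVertex_of_mem hX.1 hu) p hp

/-- The product update of pure simplicial models is pure: its facets are exactly the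
chromatic products `X × Y` of enabled pairs of facets. -/
lemma SModel.update_pure {n : ℕ} {V W Val : Type} (M : SModel (Fin (n+1)) V Val)
    (Act : SActModel (Fin (n+1)) W Val) (hpM : M.toCSC.Pure n)
    (hpA : Act.toCSC.Pure n) : (M.update Act).toCSC.Pure n := by
  rintro Z ⟨⟨-, X, Y, hX, hY, hpre, hsub⟩, hmax⟩
  have hne : (chromPair M.color Act.color X Y).Nonempty :=
    M.toCSC.chromPair_nonempty Act.toCSC hpA hX hY
  have hmem : chromPair M.color Act.color X Y ∈ (M.update Act).simplexes :=
    ⟨hne, X, Y, hX, hY, hpre, subset_rfl⟩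
  have hZ : Z = chromPair M.color Act.color X Y := hmax _ hmem hsub
  rw [hZ]
  exact M.toCSC.ncard_chromPair Act.toCSC hpM hpA hX hY

/-! ### Isomorphisms of Kripke models and of simplicial models -/

/-- Isomorphism of Kripke models. -/
def KModel.Iso {A S T AP : Type} (M : KModel A S AP) (N : KModel A T AP) : Prop :=
  ∃ e : S ≃ T,
    (∀ a u v, M.rel a u v ↔ N.rel a (e u) (e v)) ∧ ∀ s, N.val (e s) = M.val s

/-- Isomorphism of simplicial models: a color- and label-preserving bijection between the
vertices which is simplicial in both directions. -/
def SModel.Iso {A V W Val : Type} (M : SModel A V Val) (N : SModel A W Val) : Prop :=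
  ∃ e : M.toCSC.Vertices ≃ N.toCSC.Vertices,
    (∀ X ∈ M.simplexes, vimage (⇑e) X ∈ N.simplexes) ∧
    (∀ Y ∈ N.simplexes, vimage (⇑e.symm) Y ∈ M.simplexes) ∧
    (∀ v : M.toCSC.Vertices, N.color (e v).1 = M.color v.1) ∧
    (∀ v : M.toCSC.Vertices, N.label (e v).1 = M.label v.1)

/-- The functor `F` on action models: the Kripke action model on the facets of a
simplicial action model, copying preconditions. -/
def kactOf {n : ℕ} {W Val : Type} (Act : SActModel (Fin (n+1)) W Val)
    (hp : Act.toCSC.Pure n) : KActModel (Fin (n+1)) Act.toCSC.Facets Val where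
  toKFrame := kframeOf Act.toCSC hp
  pre Y := Act.pre Y.1

open Classical in
/-- The functor `G` on action models: the simplicial action model obtained by gluing one
`n`-simplex per action point of a Kripke action model, copying preconditions. -/
noncomputable def sactOf {n : ℕ} {T Val : Type} [Inhabited Val]
    (Act : KActModel (Fin (n+1)) T Val) :
    SActModel (Fin (n+1)) (GVert Act.toKFrame) Val where
  toCSC := cscOf Act.toKFrame
  pre Z :=
    if h : ∃ t, Z = gFacet Act.toKFrame t then Act.pre h.choose else Form.falsum

/-- The product update of a local Kripke model is local. -/
lemma KModel.update_local {A S T Val : Type} (M : KModel A S (A × Val))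
    (Act : KActModel A T Val) (hloc : M.Local) : (M.update Act).Local := by
  intro a u v h
  exact hloc a u.1.1 v.1.1 h.1

/-! For `F`, the facets of `M[𝒜]` are exactly the chromatic products `X × Y` of facets with
`M, X ⊨ pre(Y)`, and `X × Y` determines `(X, Y)` since every facet has a vertex of each
color; two such products share an `a`-colored vertex iff both components do, so the relations
and valuations match. For `G`, the vertex `⟦((s, t), i)⟧` of `G(M[𝒜])` corresponds to
`(⟦(s, i)⟧, ⟦(t, i)⟧)`; truth at the facet glued for `s` is truth at `s`, and properness of `𝒜`
makes the precondition of the facet glued for `t` equal to `pre(t)`. -/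

lemma KModel.Iso.symm {A S T AP : Type} {M : KModel A S AP} {N : KModel A T AP}
    (h : M.Iso N) : N.Iso M := by
  obtain ⟨e, hrel, hval⟩ := h
  refine ⟨e.symm, fun a u v => ?_, fun t => ?_⟩
  · rw [hrel, e.apply_symm_apply, e.apply_symm_apply]
  · rw [← hval, e.apply_symm_apply]

lemma vimage_eq_image {V W : Type} {P : V → Prop} {Q : W → Prop}
    (e : Subtype P → Subtype Q) (f : V → W) (he : ∀ v, (e v).1 = f v.1) (hP : ∀ v, P v)
    (X : Set V) : vimage e X = f '' X := by
  ext w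
  constructor
  · rintro ⟨v, hv, rfl⟩
    exact ⟨v.1, hv, (he v).symm⟩
  · rintro ⟨v, hv, rfl⟩
    exact ⟨⟨v, hP v⟩, hv, he _⟩

lemma vimage_symm_eq_preimage {V W : Type} {P : V → Prop} {Q : W → Prop}
    (e : Subtype P ≃ Subtype Q) (f : V → W) (he : ∀ v, (e v).1 = f v.1) (hP : ∀ v, P v)
    (Y : Set W) : vimage e.symm Y = f ⁻¹' Y := by
  ext v
  constructor
  · rintro ⟨w, hw, rfl⟩
    rwa [Set.mem_preimage, ← he, e.apply_symm_apply]
  · intro hv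
    exact ⟨e ⟨v, hP v⟩, by rwa [he], by rw [e.symm_apply_apply]⟩

section SimplicialToKripke

variable {n : ℕ} {V W Val : Type}

lemma sat_kmodelOf (M : SModel (Fin (n+1)) V Val) (hp : M.toCSC.Pure n)
    (φ : Form (Fin (n+1)) (Fin (n+1) × Val)) :
    ∀ X : M.toCSC.Facets, (kmodelOf M hp).sat X φ ↔ M.sat X.1 φ := by
  induction φ with
  | atom p =>
    intro X
    show p ∈ ⋃ v ∈ X.1, M.label v ↔ _
    simp only [SModel.sat, Set.mem_iUnion, exists_prop]
  | neg φ ih => exact fun X => not_congr (ih X)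
  | and φ ψ ih₁ ih₂ => exact fun X => and_congr (ih₁ X) (ih₂ X)
  | K a φ ih =>
    intro X
    exact ⟨fun h Y hY hXY => (ih ⟨Y, hY⟩).1 (h ⟨Y, hY⟩ hXY),
      fun h Y hXY => (ih Y).2 (h Y.1 Y.2 hXY)⟩

lemma CSC.fst_image_chromPair (C : CSC (Fin (n+1)) V) (D : CSC (Fin (n+1)) W)
    (hpD : D.Pure n) {X : Set V} {Y : Set W} (hY : D.IsFacet Y) :
    Prod.fst '' chromPair C.color D.color X Y = X := by
  refine Set.Subset.antisymm (by rintro _ ⟨p, hp, rfl⟩; exact hp.1) fun u hu => ?_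
  obtain ⟨w, hw, hcw⟩ := D.facet_exists_color hpD hY (C.color u)
  exact ⟨(u, w), ⟨hu, hw, hcw.symm⟩, rfl⟩

lemma CSC.snd_image_chromPair (C : CSC (Fin (n+1)) V) (D : CSC (Fin (n+1)) W)
    (hpC : C.Pure n) {X : Set V} {Y : Set W} (hX : C.IsFacet X) :
    Prod.snd '' chromPair C.color D.color X Y = Y := by
  refine Set.Subset.antisymm (by rintro _ ⟨p, hp, rfl⟩; exact hp.2.1) fun w hw => ?_
  obtain ⟨u, hu, hcu⟩ := C.facet_exists_color hpC hX (D.color w)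
  exact ⟨(u, w), ⟨hu, hw, hcu⟩, rfl⟩

lemma SModel.isFacet_update_chromPair (M : SModel (Fin (n+1)) V Val)
    (Act : SActModel (Fin (n+1)) W Val) (hpM : M.toCSC.Pure n) (hpA : Act.toCSC.Pure n)
    {X : Set V} {Y : Set W} (hX : M.toCSC.IsFacet X) (hY : Act.toCSC.IsFacet Y)
    (hpre : M.sat X (Act.pre Y)) :
    (M.update Act).toCSC.IsFacet (chromPair M.color Act.color X Y) := by
  refine ⟨⟨M.toCSC.chromPair_nonempty Act.toCSC hpA hX hY, X, Y, hX, hY, hpre, subset_rfl⟩, ?_⟩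
  rintro Z ⟨-, X', Y', hX', hY', -, hZ⟩ hsub
  have hfin : (chromPair M.color Act.color X' Y').Finite :=
    ((M.toCSC.finite_mem X' hX'.1).prod (Act.toCSC.finite_mem Y' hY'.1)).subset
      fun p hp => Set.mk_mem_prod hp.1 hp.2.1
  refine Set.eq_of_subset_of_ncard_le hsub ?_ (hfin.subset hZ)
  calc Z.ncard ≤ (chromPair M.color Act.color X' Y').ncard := Set.ncard_le_ncard hZ hfin
    _ = n + 1 := M.toCSC.ncard_chromPair Act.toCSC hpM hpA hX' hY'
    _ = (chromPair M.color Act.color X Y).ncard :=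
        (M.toCSC.ncard_chromPair Act.toCSC hpM hpA hX hY).symm

variable (M : SModel (Fin (n+1)) V Val) (Act : SActModel (Fin (n+1)) W Val)
  (hpM : M.toCSC.Pure n) (hpA : Act.toCSC.Pure n)

def chromPairFacet (p : {p : M.toCSC.Facets × Act.toCSC.Facets //
      (kmodelOf M hpM).sat p.1 ((kactOf Act hpA).pre p.2)}) :
    (M.update Act).toCSC.Facets :=
  ⟨chromPair M.color Act.color p.1.1.1 p.1.2.1,
    M.isFacet_update_chromPair Act hpM hpA p.1.1.2 p.1.2.2 ((sat_kmodelOf M hpM _ p.1.1).1 p.2)⟩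

lemma chromPairFacet_bijective : Function.Bijective (chromPairFacet M Act hpM hpA) := by
  constructor
  · rintro ⟨⟨X, Y⟩, _⟩ ⟨⟨X', Y'⟩, _⟩ h
    have hXY : chromPair M.color Act.color X.1 Y.1 = chromPair M.color Act.color X'.1 Y'.1 :=
      congrArg Subtype.val h
    have hX : X.1 = X'.1 := by
      rw [← M.toCSC.fst_image_chromPair Act.toCSC hpA (X := X.1) Y.2, hXY,
        M.toCSC.fst_image_chromPair Act.toCSC hpA Y'.2]
    have hY : Y.1 = Y'.1 := by
      rw [← M.toCSC.snd_image_chromPair Act.toCSC hpM (Y := Y.1) X.2, hXY,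
        M.toCSC.snd_image_chromPair Act.toCSC hpM X'.2]
    exact Subtype.ext (Prod.ext (Subtype.ext hX) (Subtype.ext hY))
  · rintro ⟨Z, ⟨-, X, Y, hX, hY, hpre, hZ⟩, hmax⟩
    have hZ_eq : Z = chromPair M.color Act.color X Y :=
      hmax _ (M.isFacet_update_chromPair Act hpM hpA hX hY hpre).1 hZ
    exact ⟨⟨(⟨X, hX⟩, ⟨Y, hY⟩), (sat_kmodelOf M hpM _ ⟨X, hX⟩).2 hpre⟩, Subtype.ext hZ_eq.symm⟩

lemma rel_chromPairFacet_iff (a : Fin (n+1))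
    (p q : {p : M.toCSC.Facets × Act.toCSC.Facets //
      (kmodelOf M hpM).sat p.1 ((kactOf Act hpA).pre p.2)}) :
    ((kmodelOf M hpM).update (kactOf Act hpA)).rel a p q ↔
      (kmodelOf (M.update Act) (M.update_pure Act hpM hpA)).rel a
        (chromPairFacet M Act hpM hpA p) (chromPairFacet M Act hpM hpA q) := by
  constructor
  · rintro ⟨⟨u, ⟨hu₁, hu₂⟩, hcu⟩, ⟨w, ⟨hw₁, hw₂⟩, hcw⟩⟩
    refine ⟨(u, w), ⟨⟨hu₁, hw₁, ?_⟩, hu₂, hw₂, ?_⟩, hcu⟩ <;> rw [hcu, hcw]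
  · rintro ⟨⟨u, w⟩, ⟨⟨hu₁, hw₁, hc⟩, hu₂, hw₂, -⟩, hca⟩
    exact ⟨⟨u, ⟨hu₁, hu₂⟩, hca⟩, ⟨w, ⟨hw₁, hw₂⟩, hc ▸ hca⟩⟩

lemma val_chromPairFacet
    (p : {p : M.toCSC.Facets × Act.toCSC.Facets //
      (kmodelOf M hpM).sat p.1 ((kactOf Act hpA).pre p.2)}) :
    (kmodelOf (M.update Act) (M.update_pure Act hpM hpA)).val (chromPairFacet M Act hpM hpA p) =
      ((kmodelOf M hpM).update (kactOf Act hpA)).val p := by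
  ext q
  show q ∈ ⋃ v ∈ chromPair M.color Act.color p.1.1.1 p.1.2.1, M.label v.1 ↔
    q ∈ ⋃ u ∈ p.1.1.1, M.label u
  simp only [Set.mem_iUnion, exists_prop]
  constructor
  · rintro ⟨v, hv, hqv⟩
    exact ⟨v.1, hv.1, hqv⟩
  · rintro ⟨u, hu, hqu⟩
    obtain ⟨w, hw, hcw⟩ := Act.toCSC.facet_exists_color hpA p.1.2.2 (M.color u)
    exact ⟨(u, w), ⟨hu, hw, hcw.symm⟩, hqu⟩

end SimplicialToKripke

lemma kmodelOf_update_iso {n : ℕ} {V W Val : Type} (M : SModel (Fin (n+1)) V Val)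
    (hpM : M.toCSC.Pure n) (Act : SActModel (Fin (n+1)) W Val) (hpA : Act.toCSC.Pure n) :
    KModel.Iso (kmodelOf (M.update Act) (M.update_pure Act hpM hpA))
      ((kmodelOf M hpM).update (kactOf Act hpA)) :=
  KModel.Iso.symm ⟨Equiv.ofBijective _ (chromPairFacet_bijective M Act hpM hpA),
    rel_chromPairFacet_iff M Act hpM hpA, val_chromPairFacet M Act hpM hpA⟩

section KripkeToSimplicial

variable {n : ℕ} {S T Val : Type}

lemma isVertex_cscOf (M : KFrame (Fin (n+1)) S) (v : GVert M) : (cscOf M).IsVertex v := by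
  induction v using Quotient.ind with
  | _ p => exact ⟨Set.singleton_nonempty _, p.1, by rintro x rfl; exact ⟨p.2, rfl⟩⟩

lemma gFacet_injective {M : KFrame (Fin (n+1)) S} (hM : M.Proper) :
    Function.Injective (gFacet M) :=
  fun s t h => hM s t ((gFacet_subset_iff M).1 h.subset)

lemma mk_mem_gFacet_iff (M : KFrame (Fin (n+1)) S) {s t : S} {i : Fin (n+1)} :
    Quotient.mk (gSetoid M) (s, i) ∈ gFacet M t ↔ M.rel i t s := by
  constructor
  · rintro ⟨j, hj⟩
    obtain ⟨rfl, h⟩ := Quotient.exact hj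
    exact h
  · exact fun h => ⟨i, Quotient.sound ⟨rfl, h⟩⟩

lemma exists_mem_gFacet_inter_color_iff (M : KFrame (Fin (n+1)) S) (s t : S) (a : Fin (n+1)) :
    (∃ v, v ∈ gFacet M s ∩ gFacet M t ∧ (cscOf M).color v = a) ↔ M.rel a s t := by
  constructor
  · rintro ⟨_, ⟨⟨i, rfl⟩, hvt⟩, rfl⟩
    exact (M.isEquiv i).symm ((mk_mem_gFacet_iff M).1 hvt)
  · exact fun h => ⟨Quotient.mk _ (t, a), ⟨(mk_mem_gFacet_iff M).2 h, ⟨a, rfl⟩⟩, rfl⟩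

lemma sat_smodelOf (M : KModel (Fin (n+1)) S (Fin (n+1) × Val)) (hloc : M.Local)
    (φ : Form (Fin (n+1)) (Fin (n+1) × Val)) :
    ∀ s : S, (smodelOf M hloc).sat (gFacet M.toKFrame s) φ ↔ M.sat s φ := by
  induction φ with
  | atom p =>
    intro s
    constructor
    · rintro ⟨_, ⟨i, rfl⟩, hp⟩
      exact hp.1
    · exact fun hp => ⟨Quotient.mk _ (s, p.1), ⟨p.1, rfl⟩, hp, rfl⟩
  | neg φ ih => exact fun s => not_congr (ih s)
  | and φ ψ ih₁ ih₂ => exact fun s => and_congr (ih₁ s) (ih₂ s)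
  | K a φ ih =>
    intro s
    constructor
    · intro h t hst
      exact (ih t).1 (h _ (gFacet_isFacet _ t)
        ((exists_mem_gFacet_inter_color_iff _ s t a).2 hst))
    · intro h Y hY hsY
      obtain ⟨t, rfl⟩ := (isFacet_cscOf_iff _ Y).1 hY
      exact (ih t).2 (h t ((exists_mem_gFacet_inter_color_iff _ s t a).1 hsY))

lemma sactOf_pre_gFacet [Inhabited Val] {Act : KActModel (Fin (n+1)) T Val}
    (hA : Act.Proper) (t : T) :
    (sactOf Act).pre (gFacet Act.toKFrame t) = Act.pre t := by
  have hex : ∃ t', gFacet Act.toKFrame t = gFacet Act.toKFrame t' := ⟨t, rfl⟩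
  exact (dif_pos hex).trans (congrArg Act.pre (gFacet_injective hA hex.choose_spec).symm)

variable (M : KModel (Fin (n+1)) S (Fin (n+1) × Val)) (Act : KActModel (Fin (n+1)) T Val)

def pairOfVert : GVert (M.update Act).toKFrame → GVert M.toKFrame × GVert Act.toKFrame :=
  Quotient.lift (fun q => (Quotient.mk _ (q.1.1.1, q.2), Quotient.mk _ (q.1.1.2, q.2)))
    (by
      rintro ⟨u, i⟩ ⟨v, j⟩ ⟨rfl, hM, hA⟩
      exact Prod.ext (Quotient.sound ⟨rfl, hM⟩) (Quotient.sound ⟨rfl, hA⟩))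

lemma pairOfVert_injective : Function.Injective (pairOfVert M Act) := by
  intro v w
  induction v using Quotient.ind
  induction w using Quotient.ind
  intro h
  obtain ⟨hi, hM⟩ := Quotient.exact (congrArg Prod.fst h)
  obtain ⟨-, hA⟩ := Quotient.exact (congrArg Prod.snd h)
  exact Quotient.sound ⟨hi, hM, hA⟩

lemma pairOfVert_mem_chromPair_iff (u : {p : S × T // M.sat p.1 (Act.pre p.2)})
    (v : GVert (M.update Act).toKFrame) :
    pairOfVert M Act v ∈ chromPair (cscOf M.toKFrame).color (cscOf Act.toKFrame).color
        (gFacet M.toKFrame u.1.1) (gFacet Act.toKFrame u.1.2) ↔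
      v ∈ gFacet (M.update Act).toKFrame u := by
  induction v using Quotient.ind with
  | _ q =>
    obtain ⟨w, i⟩ := q
    change Quotient.mk _ (w.1.1, i) ∈ gFacet _ _ ∧ Quotient.mk _ (w.1.2, i) ∈ gFacet _ _ ∧ i = i ↔
      Quotient.mk _ (w, i) ∈ gFacet _ _
    rw [mk_mem_gFacet_iff, mk_mem_gFacet_iff, mk_mem_gFacet_iff, and_iff_left rfl]
    exact Iff.rfl

lemma exists_pairOfVert_eq {u : {p : S × T // M.sat p.1 (Act.pre p.2)}}
    {x : GVert M.toKFrame × GVert Act.toKFrame}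
    (hx : x ∈ chromPair (cscOf M.toKFrame).color (cscOf Act.toKFrame).color
        (gFacet M.toKFrame u.1.1) (gFacet Act.toKFrame u.1.2)) :
    ∃ v, pairOfVert M Act v = x := by
  obtain ⟨_, _⟩ := x
  obtain ⟨⟨i, rfl⟩, ⟨j, rfl⟩, hc⟩ := hx
  obtain rfl : i = j := hc
  exact ⟨Quotient.mk _ (u, i), rfl⟩

variable [Inhabited Val] (hloc : M.Local) {Act}

lemma mem_simplexes_update_smodelOf_iff (hA : Act.Proper)
    (Z : Set (GVert M.toKFrame × GVert Act.toKFrame)) :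
    Z ∈ ((smodelOf M hloc).update (sactOf Act)).simplexes ↔
      Z.Nonempty ∧ ∃ u : {p : S × T // M.sat p.1 (Act.pre p.2)},
        Z ⊆ chromPair (cscOf M.toKFrame).color (cscOf Act.toKFrame).color
          (gFacet M.toKFrame u.1.1) (gFacet Act.toKFrame u.1.2) := by
  constructor
  · rintro ⟨hne, X, Y, hX, hY, hpre, hZ⟩
    obtain ⟨s, rfl⟩ := (isFacet_cscOf_iff _ X).1 hX
    obtain ⟨t, rfl⟩ := (isFacet_cscOf_iff _ Y).1 hY
    rw [sactOf_pre_gFacet hA, sat_smodelOf] at hpre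
    exact ⟨hne, ⟨(s, t), hpre⟩, hZ⟩
  · rintro ⟨hne, u, hZ⟩
    refine ⟨hne, _, _, gFacet_isFacet _ u.1.1, gFacet_isFacet _ u.1.2, ?_, hZ⟩
    rw [sactOf_pre_gFacet hA, sat_smodelOf]
    exact u.2

lemma image_pairOfVert_mem_simplexes (hA : Act.Proper) {X : Set (GVert (M.update Act).toKFrame)}
    (hX : X ∈ (cscOf (M.update Act).toKFrame).simplexes) :
    pairOfVert M Act '' X ∈ ((smodelOf M hloc).update (sactOf Act)).simplexes := by
  obtain ⟨hne, u, hXu⟩ := hX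
  refine (mem_simplexes_update_smodelOf_iff M hloc hA _).2 ⟨hne.image _, u, ?_⟩
  rintro _ ⟨v, hv, rfl⟩
  exact (pairOfVert_mem_chromPair_iff M Act u v).2 (hXu hv)

lemma preimage_pairOfVert_mem_simplexes (hA : Act.Proper)
    {Y : Set (GVert M.toKFrame × GVert Act.toKFrame)}
    (hY : Y ∈ ((smodelOf M hloc).update (sactOf Act)).simplexes) :
    pairOfVert M Act ⁻¹' Y ∈ (cscOf (M.update Act).toKFrame).simplexes := by
  obtain ⟨⟨x, hx⟩, u, hYu⟩ := (mem_simplexes_update_smodelOf_iff M hloc hA Y).1 hY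
  obtain ⟨v, rfl⟩ := exists_pairOfVert_eq M Act (hYu hx)
  exact ⟨⟨v, hx⟩, u, fun w hw => (pairOfVert_mem_chromPair_iff M Act u w).1 (hYu hw)⟩

noncomputable def pairOfVertEquiv (hA : Act.Proper) :
    (smodelOf (M.update Act) (M.update_local Act hloc)).toCSC.Vertices ≃
      ((smodelOf M hloc).update (sactOf Act)).toCSC.Vertices :=
  Equiv.ofBijective
    (fun v => ⟨pairOfVert M Act v.1, by
      simpa [CSC.IsVertex] using image_pairOfVert_mem_simplexes M hloc hA (isVertex_cscOf _ v.1)⟩)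
    ⟨fun v w h => Subtype.ext (pairOfVert_injective M Act (congrArg Subtype.val h)), by
      rintro ⟨x, hx⟩
      obtain ⟨-, u, hxu⟩ := (mem_simplexes_update_smodelOf_iff M hloc hA _).1 hx
      obtain ⟨v, hv⟩ := exists_pairOfVert_eq M Act (hxu rfl)
      exact ⟨⟨v, isVertex_cscOf _ v⟩, Subtype.ext hv⟩⟩

lemma smodelOf_update_iso (hA : Act.Proper) :
    SModel.Iso (smodelOf (M.update Act) (M.update_local Act hloc))
      ((smodelOf M hloc).update (sactOf Act)) := by
  have he : ∀ v, (pairOfVertEquiv M hloc hA v).1 = pairOfVert M Act v.1 := fun _ => rfl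
  refine ⟨pairOfVertEquiv M hloc hA, fun X hX => ?_, fun Y hY => ?_, ?_, ?_⟩
  · rw [vimage_eq_image _ _ he (isVertex_cscOf _)]
    exact image_pairOfVert_mem_simplexes M hloc hA hX
  · rw [vimage_symm_eq_preimage _ _ he (isVertex_cscOf _)]
    exact preimage_pairOfVert_mem_simplexes M hloc hA hY
  all_goals
    rintro ⟨v, -⟩
    induction v using Quotient.ind
    rfl

end KripkeToSimplicial

/-- The simplicial product update agrees with the Kripke product update:
`F(M[𝒜])` and `F(M)[F(𝒜)]` are isomorphic Kripke models, and symmetrically, for a local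
proper Kripke model `M` and a proper action model `𝒜`, `G(M[𝒜])` and `G(M)[G(𝒜)]` are
isomorphic simplicial models. -/
theorem statement11 (n : ℕ) (Val : Type) [Inhabited Val] :
    (∀ (V W : Type) (M : SModel (Fin (n+1)) V Val) (hpM : M.toCSC.Pure n)
        (Act : SActModel (Fin (n+1)) W Val) (hpA : Act.toCSC.Pure n),
      KModel.Iso (kmodelOf (M.update Act) (M.update_pure Act hpM hpA))
        ((kmodelOf M hpM).update (kactOf Act hpA))) ∧
    (∀ (S T : Type) (M : KModel (Fin (n+1)) S (Fin (n+1) × Val)) (hloc : M.Local)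
        (_hM : M.Proper) (Act : KActModel (Fin (n+1)) T Val) (_hA : Act.Proper),
      SModel.Iso (smodelOf (M.update Act) (M.update_local Act hloc))
        ((smodelOf M hloc).update (sactOf Act))) :=
  ⟨fun _ _ M hpM Act hpA => kmodelOf_update_iso M hpM Act hpA,
    fun _ _ M hloc _ _ hA => smodelOf_update_iso M hloc hA⟩
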